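/- arXiv:1203.3228 — 3 statements merged into one kernel-verified Lean document; each statement's English description precedes it below -/
import Mathlib

section
/- Let N : ℝ → ℝ satisfy |N(x)| ≤ C|x|^{p+1} for all x ∈ ℝ, with p > 1. If {u_n} ⊂ H¹(ℝ) is bounded in H¹(ℝ) and sup_{x₀∈ℝ} ∫_{B₁(x₀)} u_n² dx → 0 as n → ∞ (the 'vanishing' property), then ∫_ℝ N(u_n) dx → 0. -/
/-!
A `C¹` function is controlled pointwise by its local `H¹` mass: comparing `u x ^ 2` with the
minimum of `u ^ 2` on `[x - 1, x + 1]` and integrating `(u ^ 2)' = 2 u u'` gives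
`u x ^ 2 ≤ ε / 2 + 2 √ε ‖u'‖₂`, where `ε` bounds the `L²` mass of `u` on unit balls.
Vanishing therefore forces `‖u_n‖_∞ → 0`, and `|N (u_n)| ≤ C ‖u_n‖_∞ ^ (p - 1) u_n ^ 2`
with `‖u_n‖₂ ^ 2 ≤ B` gives `∫ N (u_n) → 0`.
-/

open MeasureTheory Filter Set

section

variable {α : Type*} [MeasurableSpace α] {μ : Measure α}

theorem integral_mul_le_sqrt_mul_sqrt {f g : α → ℝ} (hf : 0 ≤ᵐ[μ] f) (hg : 0 ≤ᵐ[μ] g)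
    (hf2 : MemLp f 2 μ) (hg2 : MemLp g 2 μ) :
    ∫ a, f a * g a ∂μ ≤ √(∫ a, f a ^ 2 ∂μ) * √(∫ a, g a ^ 2 ∂μ) := by
  have := integral_mul_le_Lp_mul_Lq_of_nonneg Real.HolderConjugate.two_two hf hg
    (by simpa using hf2) (by simpa using hg2)
  simp only [Real.rpow_two, one_div] at this
  rwa [Real.sqrt_eq_rpow, Real.sqrt_eq_rpow, one_div]

theorem MeasureTheory.MemLp.integral_sq_eq_eLpNorm_toReal_sq {f : α → ℝ} (hf : MemLp f 2 μ) :
    ∫ a, f a ^ 2 ∂μ = (eLpNorm f 2 μ).toReal ^ 2 := by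
  rw [hf.eLpNorm_eq_integral_rpow_norm two_ne_zero ENNReal.ofNat_ne_top,
    ENNReal.toReal_ofReal (by positivity), ← Real.rpow_natCast _ 2,
    ← Real.rpow_mul (integral_nonneg fun _ => by positivity)]
  norm_num

theorem MeasureTheory.MemLp.setIntegral_sq_le_eLpNorm_toReal_sq {f : α → ℝ} (hf : MemLp f 2 μ)
    (s : Set α) :
    ∫ a in s, f a ^ 2 ∂μ ≤ (eLpNorm f 2 μ).toReal ^ 2 :=
  hf.integral_sq_eq_eLpNorm_toReal_sq ▸
    setIntegral_le_integral hf.integrable_sq (.of_forall fun a => sq_nonneg (f a))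

theorem abs_rpow_add_one_le {p a M : ℝ} (hp : 1 ≤ p) (h : a ^ 2 ≤ M) :
    |a| ^ (p + 1) ≤ M ^ ((p - 1) / 2) * a ^ 2 := by
  rcases eq_or_ne a 0 with rfl | ha
  · simp [Real.zero_rpow (by linarith : p + 1 ≠ 0)]
  have ha' : 0 < |a| := abs_pos.2 ha
  calc |a| ^ (p + 1) = (a ^ 2) ^ ((p - 1) / 2) * a ^ 2 := by
        rw [← sq_abs, ← Real.rpow_two, ← Real.rpow_mul ha'.le, ← Real.rpow_add ha']
        ring_nf
    _ ≤ M ^ ((p - 1) / 2) * a ^ 2 := by gcongr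

theorem abs_integral_comp_le_of_sq_le {N : ℝ → ℝ} {C p M : ℝ} (hC : 0 ≤ C) (hp : 1 ≤ p)
    (hN : ∀ x, |N x| ≤ C * |x| ^ (p + 1)) {f : α → ℝ}
    (hf : Integrable (fun a => f a ^ 2) μ) (hM : ∀ a, f a ^ 2 ≤ M) :
    |∫ a, N (f a) ∂μ| ≤ C * M ^ ((p - 1) / 2) * ∫ a, f a ^ 2 ∂μ := by
  calc |∫ a, N (f a) ∂μ| ≤ ∫ a, |N (f a)| ∂μ := abs_integral_le_integral_abs
    _ ≤ ∫ a, C * M ^ ((p - 1) / 2) * f a ^ 2 ∂μ := by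
        refine integral_mono_of_nonneg (.of_forall fun _ => abs_nonneg _) (hf.const_mul _)
          (.of_forall fun a => (hN (f a)).trans ?_)
        simpa only [mul_assoc] using
          mul_le_mul_of_nonneg_left (abs_rpow_add_one_le hp (hM a)) hC
    _ = C * M ^ ((p - 1) / 2) * ∫ a, f a ^ 2 ∂μ := integral_const_mul _ _

end

theorem exists_mul_le_setIntegral_Ioo {f : ℝ → ℝ} {a b : ℝ} (hab : a ≤ b)
    (hf : ContinuousOn f (Icc a b)) :
    ∃ y ∈ Icc a b, (b - a) * f y ≤ ∫ z in Ioo a b, f z := by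
  obtain ⟨y, hy, hmin⟩ := isCompact_Icc.exists_isMinOn (nonempty_Icc.2 hab) hf
  refine ⟨y, hy, ?_⟩
  have := setIntegral_ge_of_const_le_real (μ := volume) measurableSet_Icc (by simp)
    (fun z hz => hmin hz) hf.integrableOn_Icc
  rwa [Real.volume_real_Icc_of_le hab, integral_Icc_eq_integral_Ioo, mul_comm] at this

theorem Continuous.memLp_two_restrict_Ioo {f : ℝ → ℝ} (hf : Continuous f) (a b : ℝ) :
    MemLp f 2 (volume.restrict (Ioo a b)) :=
  (memLp_two_iff_integrable_sq hf.aestronglyMeasurable).2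
    ((hf.pow 2).integrableOn_Icc.mono_set Ioo_subset_Icc_self)

theorem sq_sub_sq_le_of_contDiff {u : ℝ → ℝ} (hu : ContDiff ℝ 1 u) {a b x y : ℝ}
    (hx : x ∈ Icc a b) (hy : y ∈ Icc a b) :
    u x ^ 2 - u y ^ 2 ≤
      2 * √(∫ z in Ioo a b, u z ^ 2) * √(∫ z in Ioo a b, deriv u z ^ 2) := by
  have hc := hu.continuous
  have hc' := hu.continuous_deriv le_rfl
  have hftc : ∫ z in y..x, 2 * u z * deriv u z = u x ^ 2 - u y ^ 2 := by
    refine intervalIntegral.integral_eq_sub_of_hasDerivAt (f := fun z => u z ^ 2) (fun z _ => ?_)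
      ((by fun_prop : Continuous fun z => 2 * u z * deriv u z).intervalIntegrable _ _)
    simpa using ((hu.differentiable one_ne_zero) z).hasDerivAt.fun_pow 2
  have hsub : uIoc y x ⊆ Ioc a b := Ioc_subset_Ioc (le_min hy.1 hx.1) (max_le hy.2 hx.2)
  calc u x ^ 2 - u y ^ 2 ≤ ‖∫ z in y..x, 2 * u z * deriv u z‖ := by
        rw [hftc]; exact le_abs_self _
    _ ≤ ∫ z in uIoc y x, ‖2 * u z * deriv u z‖ :=
        intervalIntegral.norm_integral_le_integral_norm_uIoc
    _ ≤ ∫ z in Ioc a b, ‖2 * u z * deriv u z‖ :=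
        setIntegral_mono_set
          ((by fun_prop : Continuous fun z => ‖2 * u z * deriv u z‖).integrableOn_Icc.mono_set
            Ioc_subset_Icc_self)
          (.of_forall fun _ => norm_nonneg _) (.of_forall hsub)
    _ = 2 * ∫ z in Ioo a b, |u z| * |deriv u z| := by
        rw [integral_Ioc_eq_integral_Ioo, ← integral_const_mul]
        simp only [norm_mul, Real.norm_eq_abs, abs_two, mul_assoc]
    _ ≤ 2 * (√(∫ z in Ioo a b, |u z| ^ 2) * √(∫ z in Ioo a b, |deriv u z| ^ 2)) := by
        gcongr
        exact integral_mul_le_sqrt_mul_sqrt (.of_forall fun _ => abs_nonneg _)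
          (.of_forall fun _ => abs_nonneg _) (hc.abs.memLp_two_restrict_Ioo a b)
          (hc'.abs.memLp_two_restrict_Ioo a b)
    _ = _ := by simp only [sq_abs, mul_assoc]

theorem sq_le_of_contDiff {u : ℝ → ℝ} (hu : ContDiff ℝ 1 u) {a b x : ℝ} (hab : a < b)
    (hx : x ∈ Icc a b) :
    u x ^ 2 ≤ (∫ z in Ioo a b, u z ^ 2) / (b - a) +
      2 * √(∫ z in Ioo a b, u z ^ 2) * √(∫ z in Ioo a b, deriv u z ^ 2) := by
  obtain ⟨y, hy, hmean⟩ := exists_mul_le_setIntegral_Ioo hab.le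
    (f := fun z => u z ^ 2) (hu.continuous.pow 2).continuousOn
  have := sq_sub_sq_le_of_contDiff hu hx hy
  have : u y ^ 2 ≤ (∫ z in Ioo a b, u z ^ 2) / (b - a) := by
    rw [le_div_iff₀ (sub_pos.2 hab)]; linarith
  linarith

theorem sq_le_of_forall_setIntegral_Ioo_le {u : ℝ → ℝ} (hu : ContDiff ℝ 1 u) {ε D : ℝ}
    (hε : ∀ x₀, ∫ z in Ioo (x₀ - 1) (x₀ + 1), u z ^ 2 ≤ ε)
    (hD : ∀ x₀, ∫ z in Ioo (x₀ - 1) (x₀ + 1), deriv u z ^ 2 ≤ D) (x : ℝ) :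
    u x ^ 2 ≤ ε / 2 + 2 * √ε * √D := by
  have h := sq_le_of_contDiff hu (by linarith : x - 1 < x + 1)
    (⟨by linarith, by linarith⟩ : x ∈ Icc (x - 1) (x + 1))
  rw [show x + 1 - (x - 1) = 2 by ring] at h
  refine h.trans ?_
  gcongr
  exacts [hε x, hε x, hD x]

theorem vanishing_kills_nonlinearity_general
    (N : ℝ → ℝ) (C p : ℝ) (hC : 0 ≤ C) (hp : 1 < p)
    (hNb : ∀ x : ℝ, |N x| ≤ C * |x| ^ (p + 1))
    (u : ℕ → ℝ → ℝ) (B : ℝ)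
    (hdiff : ∀ n, ContDiff ℝ 1 (u n))
    (hmem : ∀ n, MemLp (u n) 2 volume)
    (hmem' : ∀ n, MemLp (deriv (u n)) 2 volume)
    (hbdd : ∀ n, (eLpNorm (u n) 2 volume).toReal ^ 2
      + (eLpNorm (deriv (u n)) 2 volume).toReal ^ 2 ≤ B)
    (hvan : Tendsto
      (fun n => ⨆ x₀ : ℝ, ∫ x in Set.Ioo (x₀ - 1) (x₀ + 1), (u n x) ^ 2)
      atTop (nhds 0)) :
    Tendsto (fun n => ∫ x : ℝ, N (u n x)) atTop (nhds 0) := by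
  set ε := fun n => ⨆ x₀ : ℝ, ∫ x in Ioo (x₀ - 1) (x₀ + 1), u n x ^ 2
  have hB : ∀ n s, ∫ x in s, u n x ^ 2 ≤ B ∧ ∫ x in s, deriv (u n) x ^ 2 ≤ B := by
    intro n s
    have := (hmem n).setIntegral_sq_le_eLpNorm_toReal_sq s
    have := (hmem' n).setIntegral_sq_le_eLpNorm_toReal_sq s
    constructor <;> nlinarith [hbdd n, sq_nonneg (eLpNorm (u n) 2 volume).toReal,
      sq_nonneg (eLpNorm (deriv (u n)) 2 volume).toReal]
  have hloc : ∀ n x₀, ∫ x in Ioo (x₀ - 1) (x₀ + 1), u n x ^ 2 ≤ ε n := fun n =>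
    le_ciSup (f := fun x₀ => ∫ x in Ioo (x₀ - 1) (x₀ + 1), u n x ^ 2)
      ⟨B, forall_mem_range.2 fun _ => (hB n _).1⟩
  have hsup : ∀ n x, u n x ^ 2 ≤ ε n / 2 + 2 * √(ε n) * √B := fun n =>
    sq_le_of_forall_setIntegral_Ioo_le (hdiff n) (hloc n) fun _ => (hB n _).2
  have hbound : ∀ n, ‖∫ x, N (u n x)‖ ≤
      C * (ε n / 2 + 2 * √(ε n) * √B) ^ ((p - 1) / 2) * B := fun n =>
    (abs_integral_comp_le_of_sq_le hC hp.le hNb (hmem n).integrable_sq (hsup n)).trans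
      (mul_le_mul_of_nonneg_left (by simpa using (hB n univ).1)
        (mul_nonneg hC (Real.rpow_nonneg ((sq_nonneg _).trans (hsup n 0)) _)))
  have hM : Tendsto (fun n => ε n / 2 + 2 * √(ε n) * √B) atTop (nhds 0) := by
    simpa using (hvan.div_const 2).add ((hvan.sqrt.const_mul 2).mul_const √B)
  refine squeeze_zero_norm hbound ?_
  simpa [Real.zero_rpow (by linarith : (p - 1) / 2 ≠ 0)] using
    ((hM.rpow_const (p := (p - 1) / 2) (Or.inr (by linarith))).const_mul C).mul_const B

/-- If `|N(x)| ≤ C|x|^{p+1}` with `p > 1`, and `{u_n} ⊂ H¹(ℝ)` is bounded in `H¹(ℝ)` and has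
the 'vanishing' property `sup_{x₀} ∫_{B₁(x₀)} u_n² dx → 0`, then `∫ N(u_n) dx → 0`. -/
theorem vanishing_kills_nonlinearity
    (N : ℝ → ℝ) (C p : ℝ) (hC : 0 ≤ C) (hp : 1 < p)
    (hNc : Continuous N) (hNb : ∀ x : ℝ, |N x| ≤ C * |x| ^ (p + 1))
    (u : ℕ → ℝ → ℝ) (B : ℝ)
    (hdiff : ∀ n, ContDiff ℝ 1 (u n))
    (hmem : ∀ n, MemLp (u n) 2 volume)
    (hmem' : ∀ n, MemLp (deriv (u n)) 2 volume)
    (hbdd : ∀ n, (eLpNorm (u n) 2 volume).toReal ^ 2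
      + (eLpNorm (deriv (u n)) 2 volume).toReal ^ 2 ≤ B)
    (hvan : Tendsto
      (fun n => ⨆ x₀ : ℝ, ∫ x in Set.Ioo (x₀ - 1) (x₀ + 1), (u n x) ^ 2)
      atTop (nhds 0)) :
    Tendsto (fun n => ∫ x : ℝ, N (u n x)) atTop (nhds 0) :=
  vanishing_kills_nonlinearity_general N C p hC hp hNb u B hdiff hmem hmem' hbdd hvan
end

section
/- Let p ∈ [2, 4j⋆+1) for some j⋆ ∈ ℕ, let m^{(2j⋆)}(0) < 0, c_p > 0, and let ψ ∈ C_c^∞(ℝ) with ψ > 0 on its support and (1/2)∫ψ² = 1. Define w_λ(x) = √λ ψ(λx). Then E_lw(w_λ) = −λ^{2j⋆} (m^{(2j⋆)}(0)/(2(2j⋆)!)) ∫ (ψ^{(j⋆)})² dx − λ^{(p−1)/2} ∫ N_{p+1}(ψ) dx, and there exists λ₀ > 0 such that E_lw(w_λ) < 0 for all λ ∈ (0, λ₀). -/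
open MeasureTheory

lemma iterD_contDiff {ψ : ℝ → ℝ} (hψ : ContDiff ℝ (⊤ : ℕ∞) ψ) (n : ℕ) :
    ContDiff ℝ (⊤ : ℕ∞) (iteratedDeriv n ψ) := by
  rw [iteratedDeriv_eq_iterate]
  exact ContDiff.iterate_deriv n (hψ.of_le (by simp))

lemma iterD_compactSupport {ψ : ℝ → ℝ} (hsupp : HasCompactSupport ψ) (n : ℕ) :
    HasCompactSupport (iteratedDeriv n ψ) := by
  rw [iteratedDeriv_eq_iterate]
  induction n with
  | zero => exact hsupp
  | succ n ih => rw [Function.iterate_succ_apply']; exact ih.deriv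

lemma iterD_scale {ψ : ℝ → ℝ} (hψ : ContDiff ℝ (⊤ : ℕ∞) ψ) (t : ℝ) (n : ℕ) :
    iteratedDeriv n (fun y => ψ (t * y)) = fun x => t ^ n * iteratedDeriv n ψ (t * x) := by
  induction n with
  | zero => simp [iteratedDeriv_zero]
  | succ n ih =>
      rw [iteratedDeriv_succ, ih]
      funext x
      have hd : HasDerivAt (fun x : ℝ => iteratedDeriv n ψ (t * x))
          (iteratedDeriv (n + 1) ψ (t * x) * t) x := by
        have h1 : HasDerivAt (iteratedDeriv n ψ) (iteratedDeriv (n + 1) ψ (t * x)) (t * x) := by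
          have := ((iterD_contDiff hψ n).differentiable
            (by simp) (t * x)).hasDerivAt
          rwa [← iteratedDeriv_succ] at this
        have h2 : HasDerivAt (fun x : ℝ => t * x) t x := by
          simpa using (hasDerivAt_id x).const_mul t
        exact h1.comp x h2
      have : HasDerivAt (fun x : ℝ => t ^ n * iteratedDeriv n ψ (t * x))
          (t ^ n * (iteratedDeriv (n + 1) ψ (t * x) * t)) x := hd.const_mul _
      rw [this.deriv]; rw [iteratedDeriv_succ]; ring

lemma iterD_const_mul {n : ℕ} {f : ℝ → ℝ} (hf : ContDiff ℝ n f) (c x : ℝ) :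
    iteratedDeriv n (fun z => c * f z) x = c * iteratedDeriv n f x := by
  rw [← iteratedDerivWithin_univ, ← iteratedDerivWithin_univ]
  exact iteratedDerivWithin_const_mul (Set.mem_univ x) uniqueDiffOn_univ c hf.contDiffAt.contDiffWithinAt

/-- For `ψ ∈ C_c^∞(ℝ)` nonnegative (positive on its support) with `(1/2)∫ψ² = 1`, and
`w_λ(x) = √λ ψ(λx)`, the long-wave energy satisfies
`E_lw(w_λ) = −λ^{2j⋆} (m^{(2j⋆)}(0)/(2(2j⋆)!)) ∫ (ψ^{(j⋆)})² − λ^{(p−1)/2} ∫ N_{p+1}(ψ)`,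
and `E_lw(w_λ) < 0` for all sufficiently small `λ > 0`. Here `a = m^{(2j⋆)}(0) < 0`,
`c_p > 0`, `2 ≤ p < 4j⋆+1`, and `N_{p+1}(x) = c_p x|x|^p/(p+1)`. -/
theorem long_wave_energy_negative_for_small_scaling
    (j : ℕ) (hj : 1 ≤ j) (p : ℝ) (hp2 : 2 ≤ p) (hp4 : p < 4 * (j : ℝ) + 1)
    (a cp : ℝ) (ha : a < 0) (hcp : 0 < cp)
    (ψ : ℝ → ℝ) (hψ : ContDiff ℝ (⊤ : ℕ∞) ψ) (hsupp : HasCompactSupport ψ)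
    (hpos : ∀ x ∈ Function.support ψ, 0 < ψ x)
    (hQ : ((1 : ℝ) / 2) * ∫ x : ℝ, (ψ x) ^ 2 = 1) :
    (∀ t : ℝ, 0 < t →
      -(∫ x : ℝ, ((a / (2 * (Nat.factorial (2 * j)))) *
            (iteratedDeriv j (fun y => Real.sqrt t * ψ (t * y)) x) ^ 2
          + cp * (Real.sqrt t * ψ (t * x)) * |Real.sqrt t * ψ (t * x)| ^ p / (p + 1)))
        = -(t ^ (2 * j) * ((a / (2 * (Nat.factorial (2 * j)))) *
              ∫ x : ℝ, (iteratedDeriv j ψ x) ^ 2))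
          - t ^ ((p - 1) / 2) * ∫ x : ℝ, cp * ψ x * |ψ x| ^ p / (p + 1))
    ∧ ∃ t₀ : ℝ, 0 < t₀ ∧ ∀ t : ℝ, 0 < t → t < t₀ →
      -(∫ x : ℝ, ((a / (2 * (Nat.factorial (2 * j)))) *
            (iteratedDeriv j (fun y => Real.sqrt t * ψ (t * y)) x) ^ 2
          + cp * (Real.sqrt t * ψ (t * x)) * |Real.sqrt t * ψ (t * x)| ^ p / (p + 1)))
        < 0 := by
  set A : ℝ := a / (2 * (Nat.factorial (2 * j))) with hA
  have hp0 : (0 : ℝ) < p := by linarith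
  have hψcont : Continuous ψ := hψ.continuous
  have hψnn : ∀ x, 0 ≤ ψ x := by
    intro x
    by_cases hx : ψ x = 0
    · simp [hx]
    · exact (hpos x hx).le
  have hDcont : Continuous (iteratedDeriv j ψ) := (iterD_contDiff hψ j).continuous
  have hDsupp : HasCompactSupport (iteratedDeriv j ψ) := iterD_compactSupport hsupp j
  have hI1int : Integrable (fun u => (iteratedDeriv j ψ u) ^ 2) := by
    apply Continuous.integrable_of_hasCompactSupport (hDcont.pow 2)
    have := hDsupp.mul_right (f' := iteratedDeriv j ψ)
    simpa [Pi.mul_def, pow_two] using this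
  set N : ℝ → ℝ := fun u => cp * ψ u * |ψ u| ^ p / (p + 1) with hNdef
  have hNcont : Continuous N := by
    apply Continuous.div_const
    exact (continuous_const.mul hψcont).mul
      (hψcont.abs.rpow_const fun x => Or.inr hp0.le)
  have hNsupp : HasCompactSupport N := by
    have hEq : N = ψ * fun u => cp * |ψ u| ^ p / (p + 1) := by
      funext u; simp only [hNdef, Pi.mul_apply]; ring
    rw [hEq]
    exact hsupp.mul_right
  have hNint : Integrable N := hNcont.integrable_of_hasCompactSupport hNsupp
  set I1 : ℝ := ∫ x : ℝ, (iteratedDeriv j ψ x) ^ 2 with hI1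
  set I2 : ℝ := ∫ x : ℝ, N x with hI2
  -- the key integral identity
  have key : ∀ t : ℝ, 0 < t →
      (∫ x : ℝ, (A * (iteratedDeriv j (fun y => Real.sqrt t * ψ (t * y)) x) ^ 2
          + cp * (Real.sqrt t * ψ (t * x)) * |Real.sqrt t * ψ (t * x)| ^ p / (p + 1)))
        = t ^ (2 * j) * (A * I1) + t ^ ((p - 1) / 2) * I2 := by
    intro t ht
    have hst : (0 : ℝ) < Real.sqrt t := Real.sqrt_pos.mpr ht
    have hscale : iteratedDeriv j (fun y => Real.sqrt t * ψ (t * y))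
        = fun x => Real.sqrt t * (t ^ j * iteratedDeriv j ψ (t * x)) := by
      have hcomp : ContDiff ℝ j (fun y => ψ (t * y)) :=
        (hψ.comp (contDiff_const.mul contDiff_id)).of_le (by exact_mod_cast le_top)
      funext x
      rw [iterD_const_mul hcomp (Real.sqrt t) x, iterD_scale hψ t j]
    set g : ℝ → ℝ := fun u => (t * t ^ (2 * j) * A) * (iteratedDeriv j ψ u) ^ 2
        + (Real.sqrt t) ^ (p + 1) * N u with hg
    have hpt : (fun x => A * (iteratedDeriv j (fun y => Real.sqrt t * ψ (t * y)) x) ^ 2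
          + cp * (Real.sqrt t * ψ (t * x)) * |Real.sqrt t * ψ (t * x)| ^ p / (p + 1))
        = fun x => g (t * x) := by
      funext x
      rw [hscale]
      simp only [hg, hNdef]
      have habs : |Real.sqrt t * ψ (t * x)| = Real.sqrt t * |ψ (t * x)| := by
        rw [abs_mul, abs_of_nonneg (Real.sqrt_nonneg t)]
      rw [habs, Real.mul_rpow (Real.sqrt_nonneg t) (abs_nonneg _),
        Real.rpow_add_one hst.ne' p]
      have hsq : Real.sqrt t * Real.sqrt t = t := Real.mul_self_sqrt ht.le
      have hpow : (t : ℝ) ^ (2 * j) = t ^ j * t ^ j := by rw [two_mul, pow_add]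
      rw [hpow]
      have e1 : (Real.sqrt t * (t ^ j * iteratedDeriv j ψ (t * x))) ^ 2
          = t * (t ^ j * t ^ j) * (iteratedDeriv j ψ (t * x)) ^ 2 := by
        rw [mul_pow, pow_two (Real.sqrt t), hsq]; ring
      rw [e1]; ring
    rw [hpt]
    have hcomp : (∫ x : ℝ, g (t * x)) = |t⁻¹| • ∫ y : ℝ, g y :=
      Measure.integral_comp_mul_left g t
    rw [hcomp, smul_eq_mul, abs_of_pos (inv_pos.mpr ht)]
    have hint : (∫ y : ℝ, g y)
        = (t * t ^ (2 * j) * A) * I1 + (Real.sqrt t) ^ (p + 1) * I2 := by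
      simp only [hg]
      rw [integral_add (hI1int.const_mul _) (hNint.const_mul _),
        integral_const_mul, integral_const_mul]
    rw [hint]
    have hrp : Real.sqrt t ^ (p + 1) = t * t ^ ((p - 1) / 2) := by
      rw [Real.sqrt_eq_rpow, ← Real.rpow_mul ht.le]
      have : (1 / 2 : ℝ) * (p + 1) = 1 + (p - 1) / 2 := by ring
      rw [this, Real.rpow_add ht, Real.rpow_one]
    rw [hrp]
    field_simp
  constructor
  · intro t ht
    rw [key t ht]; ring
  · have hfac : (0 : ℝ) < 2 * (Nat.factorial (2 * j)) := by positivity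
    have hAneg : A ≤ 0 := div_nonpos_of_nonpos_of_nonneg ha.le hfac.le
    have hI1nn : 0 ≤ I1 := integral_nonneg fun u => sq_nonneg _
    set C : ℝ := -(A * I1) with hC
    have hCnn : 0 ≤ C := by
      have : A * I1 ≤ 0 := mul_nonpos_of_nonpos_of_nonneg hAneg hI1nn
      simp only [hC]; linarith
    have hNnn : ∀ u, 0 ≤ N u := by
      intro u
      have h1 : 0 ≤ |ψ u| ^ p := Real.rpow_nonneg (abs_nonneg _) p
      have h2 := hψnn u
      have : (0:ℝ) < p + 1 := by linarith
      exact div_nonneg (mul_nonneg (mul_nonneg hcp.le h2) h1) this.le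
    have hI2pos : 0 < I2 := by
      rw [hI2]
      refine (integral_pos_iff_support_of_nonneg hNnn hNint).mpr ?_
      have hsuppN : Function.support N = Function.support ψ := by
        ext u
        simp only [Function.mem_support]
        constructor
        · intro h hu; apply h; simp [hNdef, hu]
        · intro hu
          have hψu : 0 < ψ u := hpos u hu
          have h1 : 0 < |ψ u| ^ p := Real.rpow_pos_of_pos (abs_pos.mpr hu) p
          have : 0 < N u := by
            simp only [hNdef]
            have : (0:ℝ) < p + 1 := by linarith
            positivity
          exact this.ne'
      rw [hsuppN]
      have hψ2int : Integrable (fun x => ψ x ^ 2) := by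
        apply Continuous.integrable_of_hasCompactSupport (hψcont.pow 2)
        have := hsupp.mul_right (f' := ψ)
        simpa [Pi.mul_def, pow_two] using this
      have h2 : 0 < ∫ x : ℝ, ψ x ^ 2 := by linarith
      have h3 := (integral_pos_iff_support_of_nonneg
        (fun u => sq_nonneg (ψ u)) hψ2int).mp h2
      have hs : Function.support (fun x => ψ x ^ 2) = Function.support ψ := by
        ext u; simp [Function.mem_support, pow_eq_zero_iff]
      rwa [hs] at h3
    set e : ℝ := 2 * (j : ℝ) - (p - 1) / 2 with he
    have hepos : 0 < e := by simp only [he]; linarith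
    have hCp1 : (0:ℝ) < C + 1 := by linarith
    set t₀ : ℝ := min 1 ((I2 / (C + 1)) ^ ((1:ℝ) / e)) with ht₀def
    have ht₀pos : 0 < t₀ :=
      lt_min one_pos (Real.rpow_pos_of_pos (div_pos hI2pos hCp1) _)
    refine ⟨t₀, ht₀pos, ?_⟩
    intro t ht htt
    rw [key t ht]
    have hte : t ^ e < I2 / (C + 1) := by
      have h1 : t ^ e < t₀ ^ e := Real.rpow_lt_rpow ht.le htt hepos
      have h2 : t₀ ^ e ≤ ((I2 / (C + 1)) ^ ((1:ℝ) / e)) ^ e :=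
        Real.rpow_le_rpow ht₀pos.le (min_le_right _ _) hepos.le
      have h3 : ((I2 / (C + 1)) ^ ((1:ℝ) / e)) ^ e = I2 / (C + 1) := by
        rw [← Real.rpow_mul (div_pos hI2pos hCp1).le, one_div,
          inv_mul_cancel₀ hepos.ne', Real.rpow_one]
      linarith
    have htenn : 0 ≤ t ^ e := Real.rpow_nonneg ht.le e
    have htC : t ^ e * C < I2 := by
      have h4 : t ^ e * (C + 1) < I2 := by
        have := mul_lt_mul_of_pos_right hte hCp1
        rwa [div_mul_cancel₀ _ hCp1.ne'] at this
      nlinarith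
    have hsplit : (t : ℝ) ^ (2 * j) = t ^ e * t ^ ((p - 1) / 2) := by
      rw [← Real.rpow_natCast t (2 * j), ← Real.rpow_add ht]
      congr 1
      simp only [he]
      push_cast
      ring
    have hppos : 0 < t ^ ((p - 1) / 2) := Real.rpow_pos_of_pos ht _
    calc -(t ^ (2 * j) * (A * I1) + t ^ ((p - 1) / 2) * I2)
        = t ^ ((p - 1) / 2) * (t ^ e * C - I2) := by
          rw [hsplit, hC]; ring
      _ < 0 := mul_neg_of_pos_of_neg hppos (by linarith)
end

section
/- Let v_n ∈ H¹(ℝ) (n ∈ ℕ) with supp(v_n^{(1)}) ⊂ [−2M_n, 2M_n] and supp(v_n^{(2)}) ⊂ ℝ \ (−N_n/2, N_n/2), where M_n, N_n → ∞, M_n/N_n → 0, and ‖v_n^{(1)}‖_{L²}, ‖v_n^{(2)}‖_{L²} ≤ R. If L satisfies |Lv(x)| ≤ C̃₁ dist(x, supp(v))^{−1} ‖v‖_{L²} off the support of v, then ∫_ℝ v_n^{(2)} L v_n^{(1)} dx → 0 as n → ∞; in fact |∫ v_n^{(2)} L v_n^{(1)}| ≤ C̃₁ R² (4/(N_n(1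 − 4M_n/N_n)))^{1/2} for large n. -/
/-!
Off the support of `f`, which lies in `[-2M, 2M]`, the decay hypothesis gives
`|L f x| ≤ C₁ ‖f‖₂ / (|x| - 2M)`. On `{|x| ≥ N/2}`, where `g` lives, this weight is square
integrable with `∫ (|x| - 2M)⁻² = 2 / (N/2 - 2M)`, so Cauchy–Schwarz bounds the interaction by
`C₁ ‖f‖₂ ‖g‖₂ √(2 / (N/2 - 2M))`, which tends to `0` because `N - 4M → ∞`.
-/

open MeasureTheory Filter Set
open scoped ENNReal

section L2

variable {α : Type*} [MeasurableSpace α] {μ : Measure α}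

theorem abs_integral_mul_le_of_abs_le {g h w : α → ℝ} (hg : MemLp g 2 μ) (hw : MemLp w 2 μ)
    (hhw : ∀ᵐ x ∂μ, |h x| ≤ w x) :
    |∫ x, g x * h x ∂μ| ≤ (eLpNorm g 2 μ).toReal * (eLpNorm w 2 μ).toReal := by
  have hdom : eLpNorm (fun x => g x * h x) 1 μ ≤ eLpNorm (w • g) 1 μ :=
    eLpNorm_mono_ae <| hhw.mono fun x hx => by
      simp only [Pi.smul_apply', smul_eq_mul, norm_mul, Real.norm_eq_abs, mul_comm (|w x|)]
      exact mul_le_mul_of_nonneg_left (hx.trans (le_abs_self _)) (abs_nonneg _)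
  have hholder : eLpNorm (w • g) 1 μ ≤ eLpNorm w 2 μ * eLpNorm g 2 μ :=
    eLpNorm_smul_le_mul_eLpNorm hg.1 hw.1
  calc |∫ x, g x * h x ∂μ| ≤ (eLpNorm (fun x => g x * h x) 1 μ).toReal := by
        rw [eLpNorm_one_eq_lintegral_enorm, ← Real.norm_eq_abs]
        exact norm_integral_le_lintegral_norm _ |>.trans_eq (by simp only [ofReal_norm])
    _ ≤ (eLpNorm w 2 μ * eLpNorm g 2 μ).toReal :=
      ENNReal.toReal_mono (ENNReal.mul_ne_top hw.eLpNorm_ne_top hg.eLpNorm_ne_top)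
        (hdom.trans hholder)
    _ = (eLpNorm g 2 μ).toReal * (eLpNorm w 2 μ).toReal := by rw [ENNReal.toReal_mul, mul_comm]

theorem toReal_eLpNorm_two_eq_sqrt_integral_sq {f : α → ℝ} (hf : AEStronglyMeasurable f μ) :
    (eLpNorm f 2 μ).toReal = √(∫ x, f x ^ 2 ∂μ) := by
  rw [toReal_eLpNorm hf, lpNorm_eq_integral_norm_rpow_toReal two_ne_zero ENNReal.ofNat_ne_top hf,
    Real.sqrt_eq_rpow]
  norm_num [Real.norm_eq_abs]

end L2

theorem integral_Ioi_inv_sub_sq {a b : ℝ} (hab : a < b) :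
    ∫ x in Ioi b, ((x - a) ^ 2)⁻¹ = (b - a)⁻¹ := by
  have hderiv : ∀ x ∈ Ici b, HasDerivAt (fun y => -(y - a)⁻¹) ((x - a) ^ 2)⁻¹ x := by
    intro x hx
    have h := (((hasDerivAt_id x).sub_const a).inv (sub_pos.2 (hab.trans_le hx)).ne').neg
    simp only [id, neg_div, neg_neg, one_div] at h
    exact h
  have hlim : Tendsto (fun y : ℝ => -(y - a)⁻¹) atTop (nhds 0) := by
    simpa [sub_eq_add_neg] using
      (tendsto_inv_atTop_zero.comp (tendsto_atTop_add_const_right atTop (-a) tendsto_id)).neg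
  rw [integral_Ioi_of_hasDerivAt_of_nonneg' hderiv (fun x _ => by positivity) hlim]
  ring

theorem integral_abs_ge_inv_abs_sub_sq {a b : ℝ} (hab : a < b) (hb : 0 < b) :
    ∫ x in {x : ℝ | b ≤ |x|}, ((|x| - a) ^ 2)⁻¹ = 2 * (b - a)⁻¹ := by
  have hind : {x : ℝ | b ≤ |x|}.indicator (fun x => ((|x| - a) ^ 2)⁻¹) =
      fun x => (Ici b).indicator (fun t => ((t - a) ^ 2)⁻¹) |x| :=
    funext fun x => indicator_comp_right (g := fun t => ((t - a) ^ 2)⁻¹) (fun x => |x|)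
  rw [← integral_indicator (measurableSet_le measurable_const measurable_abs), hind,
    integral_comp_abs, setIntegral_indicator measurableSet_Ici, inter_eq_right.mpr (Ici_subset_Ioi.mpr hb),
    integral_Ici_eq_integral_Ioi, integral_Ioi_inv_sub_sq hab]

/-- A non-integrable function would have Bochner integral `0`. -/
theorem integrableOn_abs_ge_inv_abs_sub_sq {a b : ℝ} (hab : a < b) (hb : 0 < b) :
    IntegrableOn (fun x : ℝ => ((|x| - a) ^ 2)⁻¹) {x : ℝ | b ≤ |x|} :=
  Integrable.of_integral_ne_zero <| by
    rw [integral_abs_ge_inv_abs_sub_sq hab hb]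
    have : 0 < b - a := by linarith
    positivity

theorem abs_sub_le_infDist_of_subset_Icc {s : Set ℝ} {a : ℝ} (hs : s ⊆ Icc (-a) a)
    (hne : s.Nonempty) (x : ℝ) : |x| - a ≤ Metric.infDist x s :=
  (Metric.le_infDist hne).2 fun y hy => by
    have hya : |y| ≤ a := abs_le.2 (hs hy)
    rw [Real.dist_eq]
    linarith [abs_sub_abs_le_abs_sub x y]

def HasOffSupportDecay (L : (ℝ → ℝ) → (ℝ → ℝ)) (C : ℝ) : Prop :=
  ∀ v : ℝ → ℝ, HasCompactSupport v → MemLp v 2 volume →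
    ∀ x : ℝ, x ∉ tsupport v →
      |L v x| ≤ C / Metric.infDist x (tsupport v) * (eLpNorm v 2 volume).toReal

namespace HasOffSupportDecay

variable {L : (ℝ → ℝ) → (ℝ → ℝ)} {C : ℝ}

theorem abs_apply_le (hL : HasOffSupportDecay L C) (hC : 0 ≤ C) {v : ℝ → ℝ} {a x : ℝ}
    (hv : MemLp v 2 volume) (hsupp : tsupport v ⊆ Icc (-a) a) (hx : a < |x|) :
    |L v x| ≤ C * (eLpNorm v 2 volume).toReal * (|x| - a)⁻¹ := by
  have hcpt : HasCompactSupport v := isCompact_Icc.of_isClosed_subset (isClosed_tsupport v) hsupp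
  have hxv : x ∉ tsupport v := fun hmem => by
    have := abs_le.2 (hsupp hmem)
    linarith
  have hbound := hL v hcpt hv x hxv
  have hxa : 0 < |x| - a := sub_pos.2 hx
  rcases (tsupport v).eq_empty_or_nonempty with hempty | hne
  · rw [hempty, Metric.infDist_empty, div_zero, zero_mul] at hbound
    exact hbound.trans (by positivity)
  · calc |L v x| ≤ C / Metric.infDist x (tsupport v) * (eLpNorm v 2 volume).toReal := hbound
      _ ≤ C / (|x| - a) * (eLpNorm v 2 volume).toReal := by
        gcongr
        exact abs_sub_le_infDist_of_subset_Icc hsupp hne x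
      _ = C * (eLpNorm v 2 volume).toReal * (|x| - a)⁻¹ := by ring

theorem abs_integral_mul_le (hL : HasOffSupportDecay L C) (hC : 0 ≤ C) {f g : ℝ → ℝ}
    {a b : ℝ} (hab : a < b) (hb : 0 < b) (hf : MemLp f 2 volume) (hg : MemLp g 2 volume)
    (hfsupp : tsupport f ⊆ Icc (-a) a) (hgsupp : tsupport g ⊆ {x : ℝ | b ≤ |x|}) :
    |∫ x, g x * L f x| ≤
      (eLpNorm g 2 volume).toReal * (C * (eLpNorm f 2 volume).toReal * √(2 * (b - a)⁻¹)) := by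
  set S : Set ℝ := {x : ℝ | b ≤ |x|}
  set c := C * (eLpNorm f 2 volume).toReal
  have hc : 0 ≤ c := mul_nonneg hC ENNReal.toReal_nonneg
  set w : ℝ → ℝ := fun x => c * (|x| - a)⁻¹
  have hw_meas : AEStronglyMeasurable w (volume.restrict S) := by fun_prop
  have hw_sq : ∫ x in S, w x ^ 2 = c ^ 2 * (2 * (b - a)⁻¹) := by
    simp_rw [w, mul_pow, inv_pow]
    rw [integral_const_mul, integral_abs_ge_inv_abs_sub_sq hab hb]
  have hw : MemLp w 2 (volume.restrict S) := by
    refine (memLp_two_iff_integrable_sq hw_meas).2 ?_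
    simp_rw [w, mul_pow, inv_pow]
    exact (integrableOn_abs_ge_inv_abs_sub_sq hab hb).const_mul _
  have hw_norm : (eLpNorm w 2 (volume.restrict S)).toReal = c * √(2 * (b - a)⁻¹) := by
    rw [toReal_eLpNorm_two_eq_sqrt_integral_sq hw_meas, hw_sq, Real.sqrt_mul (sq_nonneg c),
      Real.sqrt_sq hc]
  have hLw : ∀ᵐ x ∂volume.restrict S, |L f x| ≤ w x :=
    (ae_restrict_mem (measurableSet_le measurable_const measurable_abs)).mono fun x hx =>
      hL.abs_apply_le hC hf hfsupp (hab.trans_le hx)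
  have hg_S : ∫ x in S, g x * L f x = ∫ x, g x * L f x :=
    setIntegral_eq_integral_of_forall_compl_eq_zero fun x hx => by
      rw [image_eq_zero_of_notMem_tsupport fun h => hx (hgsupp h), zero_mul]
  calc |∫ x, g x * L f x| = |∫ x in S, g x * L f x| := by rw [hg_S]
    _ ≤ (eLpNorm g 2 (volume.restrict S)).toReal * (eLpNorm w 2 (volume.restrict S)).toReal :=
      abs_integral_mul_le_of_abs_le (hg.restrict S) hw hLw
    _ ≤ (eLpNorm g 2 volume).toReal * (c * √(2 * (b - a)⁻¹)) := by
      rw [hw_norm]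
      gcongr
      exacts [hg.eLpNorm_ne_top, Measure.restrict_le_self]

end HasOffSupportDecay

theorem dichotomy_interaction_vanishes_general
    (L : (ℝ → ℝ) → (ℝ → ℝ)) (C₁ R : ℝ) (hC : 0 < C₁)
    (hL : ∀ v : ℝ → ℝ, HasCompactSupport v → MemLp v 2 volume →
      ∀ x : ℝ, x ∉ tsupport v →
        |L v x| ≤ C₁ / Metric.infDist x (tsupport v) * (eLpNorm v 2 volume).toReal)
    (f g : ℕ → ℝ → ℝ) (M N : ℕ → ℝ)
    (hN : Tendsto N atTop atTop)
    (hMN : Tendsto (fun n => M n / N n) atTop (nhds 0))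
    (hfsupp : ∀ n, tsupport (f n) ⊆ Set.Icc (-(2 * M n)) (2 * M n))
    (hgsupp : ∀ n, tsupport (g n) ⊆ {x : ℝ | N n / 2 ≤ |x|})
    (hfm : ∀ n, MemLp (f n) 2 volume) (hgm : ∀ n, MemLp (g n) 2 volume)
    (hfR : ∀ n, (eLpNorm (f n) 2 volume).toReal ≤ R)
    (hgR : ∀ n, (eLpNorm (g n) 2 volume).toReal ≤ R) :
    Tendsto (fun n => ∫ x : ℝ, g n x * L (f n) x) atTop (nhds 0) ∧
    ∀ᶠ n in atTop,
      |∫ x : ℝ, g n x * L (f n) x| ≤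
        C₁ * R ^ 2 * Real.sqrt (4 / (N n * (1 - 4 * M n / N n))) := by
  have hR : 0 ≤ R := ENNReal.toReal_nonneg.trans (hgR 0)
  have hbound : ∀ᶠ n in atTop, |∫ x : ℝ, g n x * L (f n) x| ≤
      C₁ * R ^ 2 * √(4 / (N n * (1 - 4 * M n / N n))) := by
    filter_upwards [hN.eventually_gt_atTop 0,
      hMN.eventually_lt_const (by norm_num : (0 : ℝ) < 1 / 4)] with n hNn hMNn
    have hab : 2 * M n < N n / 2 := by
      rw [div_lt_iff₀ hNn] at hMNn
      linarith
    calc |∫ x : ℝ, g n x * L (f n) x|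
        ≤ (eLpNorm (g n) 2 volume).toReal *
            (C₁ * (eLpNorm (f n) 2 volume).toReal * √(2 * (N n / 2 - 2 * M n)⁻¹)) :=
          HasOffSupportDecay.abs_integral_mul_le hL hC.le hab (by positivity) (hfm n) (hgm n)
            (hfsupp n) (hgsupp n)
      _ ≤ R * (C₁ * R * √(2 * (N n / 2 - 2 * M n)⁻¹)) := by gcongr; exacts [hgR n, hfR n]
      _ = C₁ * R ^ 2 * √(4 / (N n * (1 - 4 * M n / N n))) := by
        rw [show 2 * (N n / 2 - 2 * M n)⁻¹ = 4 / (N n * (1 - 4 * M n / N n)) by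
          field_simp; ring]
        ring
  have hden : Tendsto (fun n => N n * (1 - 4 * M n / N n)) atTop atTop :=
    hN.atTop_mul_pos one_pos (by simpa [mul_div_assoc] using (hMN.const_mul 4).const_sub 1)
  refine ⟨squeeze_zero_norm' hbound ?_, hbound⟩
  simpa only [Real.sqrt_zero, mul_zero] using
    ((tendsto_const_nhds (x := (4 : ℝ))).div_atTop hden).sqrt.const_mul (C₁ * R ^ 2)

/-- Splitting estimate: if `v_n^{(1)}` is supported in `[−2Mₙ, 2Mₙ]`, `v_n^{(2)}` outside
`(−Nₙ/2, Nₙ/2)`, with `Mₙ, Nₙ → ∞`, `Mₙ/Nₙ → 0`, `L²` norms bounded by `R`, and `L` has the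
off-support kernel decay with constant `C̃₁`, then `∫ v_n^{(2)} L v_n^{(1)} → 0`; in fact
`|∫ v_n^{(2)} L v_n^{(1)}| ≤ C̃₁ R² (4/(Nₙ(1 − 4Mₙ/Nₙ)))^{1/2}` for large `n`. -/
theorem dichotomy_interaction_vanishes
    (L : (ℝ → ℝ) → (ℝ → ℝ)) (C₁ R : ℝ) (hC : 0 < C₁) (hR : 0 ≤ R)
    (hL : ∀ v : ℝ → ℝ, HasCompactSupport v → MemLp v 2 volume →
      ∀ x : ℝ, x ∉ tsupport v →
        |L v x| ≤ C₁ / Metric.infDist x (tsupport v) * (eLpNorm v 2 volume).toReal)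
    (f g : ℕ → ℝ → ℝ) (M N : ℕ → ℝ)
    (hM : Tendsto M atTop atTop) (hN : Tendsto N atTop atTop)
    (hMN : Tendsto (fun n => M n / N n) atTop (nhds 0))
    (hMpos : ∀ n, 0 < M n)
    (hfsupp : ∀ n, tsupport (f n) ⊆ Set.Icc (-(2 * M n)) (2 * M n))
    (hgsupp : ∀ n, tsupport (g n) ⊆ {x : ℝ | N n / 2 ≤ |x|})
    (hfm : ∀ n, MemLp (f n) 2 volume) (hgm : ∀ n, MemLp (g n) 2 volume)
    (hfR : ∀ n, (eLpNorm (f n) 2 volume).toReal ≤ R)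
    (hgR : ∀ n, (eLpNorm (g n) 2 volume).toReal ≤ R) :
    Tendsto (fun n => ∫ x : ℝ, g n x * L (f n) x) atTop (nhds 0) ∧
    ∀ᶠ n in atTop,
      |∫ x : ℝ, g n x * L (f n) x| ≤
        C₁ * R ^ 2 * Real.sqrt (4 / (N n * (1 - 4 * M n / N n))) :=
  dichotomy_interaction_vanishes_general L C₁ R hC hL f g M N hN hMN hfsupp hgsupp hfm hgm hfR hgR
end
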